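/- The sum trace on real vector spaces with direct sum fails the vanishing II axiom. Concretely, let f be the real 3×3 matrix [[1,1,0],[1,−2,1],[0,1,1/2]], viewed as a map ℝ⊕ℝ⊕ℝ → ℝ⊕ℝ⊕ℝ with a = b = u = v = 1. Then: (i) the series defining Tr_Σ^v(f) (tracing out the last coordinate) converges and Tr_Σ^v(f) = [[1,1],[1,0]]; (ii) Tr_Σ^u(Tr_Σ^v(f)) is defined and equals 2 (the 1×1 matrix (2)); but (iii) the series Σ_{n≥0} (1 0)·Mⁿ·(1 0)ᵀ with M = [[−2,1],[1,1/2]] does not converge, so Tr_Σ^{u+v}(f) (tracing out the last two coordinates simultaneously) is undefined. Hence Tr_Σ^{u+v}(f) is not Kleene-equal to Tr_Σ^u(Tr_Σ^v(f)), and the sum trace is not a partial trace. -/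

import Mathlib

/-!
Tracing out the last coordinate alone involves only powers of the scalar block `(1/2)`, a
geometric series, and the resulting `2 × 2` matrix has zero lower-right block, so the second
trace is a finite sum. Tracing out the last two coordinates at once involves the powers of
`M = [[-2, 1], [1, 1/2]]`. By Cayley–Hamilton the top-left entries `a n` of `Mⁿ` satisfy
`a (n + 2) = -(3/2) a (n + 1) + 2 a n`, so `b n = (-1)ⁿ a n` satisfies a recurrence with
nonnegative coefficients summing to at least `1`, whence `|a n| ≥ 1`: the terms of the series
do not tend to zero.
-/

open Filter Matrix

/-- The matrix `[[1,1,0],[1,−2,1],[0,1,1/2]]`, viewed as a map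
`ℝ ⊕ (ℝ ⊕ ℝ) → ℝ ⊕ (ℝ ⊕ ℝ)`. -/
noncomputable def exMatrix :
    Matrix (Fin 1 ⊕ (Fin 1 ⊕ Fin 1)) (Fin 1 ⊕ (Fin 1 ⊕ Fin 1)) ℝ :=
  Matrix.of fun i j =>
    match i, j with
    | Sum.inl _, Sum.inl _ => 1
    | Sum.inl _, Sum.inr (Sum.inl _) => 1
    | Sum.inl _, Sum.inr (Sum.inr _) => 0
    | Sum.inr (Sum.inl _), Sum.inl _ => 1
    | Sum.inr (Sum.inl _), Sum.inr (Sum.inl _) => -2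
    | Sum.inr (Sum.inl _), Sum.inr (Sum.inr _) => 1
    | Sum.inr (Sum.inr _), Sum.inl _ => 0
    | Sum.inr (Sum.inr _), Sum.inr (Sum.inl _) => 1
    | Sum.inr (Sum.inr _), Sum.inr (Sum.inr _) => 1/2

/-- `exMatrix` viewed as a map `(ℝ ⊕ ℝ) ⊕ ℝ → (ℝ ⊕ ℝ) ⊕ ℝ` (for tracing out the last
coordinate only). -/
noncomputable def exMatrix' :
    Matrix ((Fin 1 ⊕ Fin 1) ⊕ Fin 1) ((Fin 1 ⊕ Fin 1) ⊕ Fin 1) ℝ :=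
  Matrix.reindex (Equiv.sumAssoc (Fin 1) (Fin 1) (Fin 1)).symm
    (Equiv.sumAssoc (Fin 1) (Fin 1) (Fin 1)).symm exMatrix

open Finset in
theorem tendsto_atTop_zero_of_tendsto_sum_range {G : Type*} [AddCommGroup G] [TopologicalSpace G]
    [IsTopologicalAddGroup G] {f : ℕ → G} {S : G}
    (h : Tendsto (fun N ↦ ∑ k ∈ range N, f k) atTop (nhds S)) :
    Tendsto f atTop (nhds 0) := by
  simpa [sum_range_succ_sub_sum] using (h.comp (tendsto_add_atTop_nat 1)).sub h

theorem pow_add_two_eq_of_sq_eq {R A : Type*} [CommSemiring R] [Semiring A] [Algebra R A]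
    {a : A} {p q : R} (h : a ^ 2 = p • a + q • 1) (n : ℕ) :
    a ^ (n + 2) = p • a ^ (n + 1) + q • a ^ n := by
  rw [pow_add, h, mul_add, mul_smul_comm, mul_smul_comm, mul_one, ← pow_succ]

theorem one_le_of_eq_mul_add_mul {b : ℕ → ℝ} {p q : ℝ} (hp : 0 ≤ p) (hq : 0 ≤ q)
    (hpq : 1 ≤ p + q) (h₀ : 1 ≤ b 0) (h₁ : 1 ≤ b 1)
    (hrec : ∀ n, b (n + 2) = p * b (n + 1) + q * b n) (n : ℕ) : 1 ≤ b n := by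
  induction n using Nat.twoStepInduction with
  | zero => exact h₀
  | one => exact h₁
  | more n ih₀ ih₁ =>
    rw [hrec]
    nlinarith

open Finset in
theorem tendsto_sum_mul_smul_one_pow_mul {𝕜 m u n : Type*} [NormedField 𝕜] [Fintype u]
    [DecidableEq u] {r : 𝕜} (hr : ‖r‖ < 1) (A : Matrix m u 𝕜) (B : Matrix u n 𝕜) :
    Tendsto (fun N ↦ ∑ k ∈ range N, A * (r • (1 : Matrix u u 𝕜)) ^ k * B) atTop
      (nhds ((1 - r)⁻¹ • (A * B))) := by
  have hterm (k : ℕ) : A * (r • 1 : Matrix u u 𝕜) ^ k * B = r ^ k • (A * B) := by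
    rw [smul_pow, one_pow, Matrix.mul_smul, Matrix.mul_one, Matrix.smul_mul]
  simpa only [hterm] using ((hasSum_geometric_of_norm_lt_one hr).smul_const (A * B)).tendsto_sum_nat

theorem exMatrix'_toBlocks₂₂ : exMatrix'.toBlocks₂₂ = (1 / 2 : ℝ) • 1 := by
  ext i j
  fin_cases i; fin_cases j
  simp [exMatrix', exMatrix, Matrix.toBlocks₂₂]

theorem exMatrix_toBlocks₂₂_sq :
    exMatrix.toBlocks₂₂ ^ 2 = (-(3 / 2) : ℝ) • exMatrix.toBlocks₂₂ + (2 : ℝ) • 1 := by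
  ext (i | i) (j | j) <;>
    simp [exMatrix, Matrix.toBlocks₂₂, sq, Matrix.mul_apply,
      Subsingleton.elim _ (0 : Fin 1)] <;>
    norm_num

theorem exMatrix_term_apply (n : ℕ) :
    (exMatrix.toBlocks₁₂ * exMatrix.toBlocks₂₂ ^ n * exMatrix.toBlocks₂₁) 0 0
      = (exMatrix.toBlocks₂₂ ^ n) (Sum.inl 0) (Sum.inl 0) := by
  simp [exMatrix, Matrix.toBlocks₁₂, Matrix.toBlocks₂₁, Matrix.mul_apply]

theorem one_le_abs_exMatrix_term_apply (n : ℕ) :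
    1 ≤ |(exMatrix.toBlocks₁₂ * exMatrix.toBlocks₂₂ ^ n * exMatrix.toBlocks₂₁) 0 0| := by
  set a : ℕ → ℝ := fun n ↦ (exMatrix.toBlocks₂₂ ^ n) (Sum.inl 0) (Sum.inl 0)
  have hrec (n : ℕ) : a (n + 2) = -(3 / 2) * a (n + 1) + 2 * a n := by
    simp [a, pow_add_two_eq_of_sq_eq exMatrix_toBlocks₂₂_sq]
  have halt : 1 ≤ (-1) ^ n * a n := by
    refine one_le_of_eq_mul_add_mul (p := 3 / 2) (q := 2) (b := fun n ↦ (-1) ^ n * a n)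
      (by norm_num) (by norm_num) (by norm_num) (by simp [a]) ?_ (fun n ↦ ?_) n
    · simp [a, exMatrix, Matrix.toBlocks₂₂]
    · simp only [hrec]
      ring
  rw [exMatrix_term_apply]
  calc 1 ≤ (-1) ^ n * a n := halt
    _ ≤ |(-1) ^ n * a n| := le_abs_self _
    _ = |a n| := by simp [abs_mul]

/-- The sum trace fails the vanishing II axiom: for
`f = [[1,1,0],[1,−2,1],[0,1,1/2]]`, (i) the sum trace over the last coordinate is
defined and equals `[[1,1],[1,0]]`; (ii) the sum trace over the middle coordinate of
the result is defined and equals `(2)`; but (iii) the sum trace over the last two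
coordinates simultaneously is undefined. -/
theorem sum_trace_fails_vanishing_two :
    -- (i)
    (∃ S : Matrix (Fin 1 ⊕ Fin 1) (Fin 1 ⊕ Fin 1) ℝ,
      Tendsto
        (fun N => ∑ n ∈ Finset.range N,
          exMatrix'.toBlocks₁₂ * exMatrix'.toBlocks₂₂ ^ n * exMatrix'.toBlocks₂₁)
        atTop (nhds S) ∧
      exMatrix'.toBlocks₁₁ + S = Matrix.fromBlocks !![1] !![1] !![1] !![0]) ∧
    -- (ii)
    (∃ S : Matrix (Fin 1) (Fin 1) ℝ,
      (let t : Matrix (Fin 1 ⊕ Fin 1) (Fin 1 ⊕ Fin 1) ℝ :=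
        Matrix.fromBlocks !![1] !![1] !![1] !![0]
       Tendsto
        (fun N => ∑ n ∈ Finset.range N,
          t.toBlocks₁₂ * t.toBlocks₂₂ ^ n * t.toBlocks₂₁) atTop (nhds S) ∧
       t.toBlocks₁₁ + S = !![(2 : ℝ)])) ∧
    -- (iii)
    ¬ ∃ S : Matrix (Fin 1) (Fin 1) ℝ,
      Tendsto
        (fun N => ∑ n ∈ Finset.range N,
          exMatrix.toBlocks₁₂ * exMatrix.toBlocks₂₂ ^ n * exMatrix.toBlocks₂₁)
        atTop (nhds S) := by
  refine ⟨?_, ?_, ?_⟩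
  · rw [exMatrix'_toBlocks₂₂]
    refine ⟨_, tendsto_sum_mul_smul_one_pow_mul (by norm_num) _ _, ?_⟩
    ext (i | i) (j | j) <;>
      norm_num [exMatrix', exMatrix, Matrix.toBlocks₁₁, Matrix.toBlocks₁₂, Matrix.toBlocks₂₁,
        Matrix.mul_apply]
  · have h₂₂ : (Matrix.fromBlocks !![1] !![1] !![1] !![(0 : ℝ)]).toBlocks₂₂ = (0 : ℝ) • 1 := by
      simp [← Matrix.ext_iff]
    dsimp only
    rw [h₂₂]
    refine ⟨_, tendsto_sum_mul_smul_one_pow_mul (by simp) _ _, ?_⟩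
    norm_num
  · rintro ⟨S, hS⟩
    have hentry : Tendsto
        (fun n ↦ (exMatrix.toBlocks₁₂ * exMatrix.toBlocks₂₂ ^ n * exMatrix.toBlocks₂₁ :
          Matrix (Fin 1) (Fin 1) ℝ) 0 0)
        atTop (nhds 0) :=
      ((continuous_apply_apply 0 0).tendsto 0).comp (tendsto_atTop_zero_of_tendsto_sum_range hS)
    have := ge_of_tendsto' hentry.abs one_le_abs_exMatrix_term_apply
    norm_num at this
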